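/- Let U : D → ℂ be C² on an open set D ⊂ ℂ with Im z ≠ 0, satisfying ∂U/∂z̄ = conj(U)/(z - z̄). Define ξ = ∂U/∂z + U/(z - z̄). Then ∂ξ/∂z̄ = 0 on D. -/

import Mathlib

/-!
Since the mixed Wirtinger derivatives of a `C²` function commute, `∂̄ ∂U = ∂ ∂̄U = ∂(Ū / s)` with
`s = z - z̄`, for which `∂s = 1` and `∂̄s = -1`. Conjugating the equation gives
`∂Ū = conj (∂̄U) = U / s̄ = -U / s`, and then the quotient rule makes the two terms of `∂̄ξ`,
namely `-(U + Ū) / s²` and `(Ū + U) / s²`, cancel.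
-/

/-- The Wirtinger derivative `∂U/∂z = (1/2)(∂_x - i ∂_y) U`. -/
noncomputable def wirtingerZ (U : ℂ → ℂ) (z : ℂ) : ℂ :=
  (1 / 2 : ℂ) * (fderiv ℝ U z 1 - Complex.I * fderiv ℝ U z Complex.I)

/-- The Wirtinger derivative `∂U/∂z̄ = (1/2)(∂_x + i ∂_y) U`. -/
noncomputable def wirtingerZbar (U : ℂ → ℂ) (z : ℂ) : ℂ :=
  (1 / 2 : ℂ) * (fderiv ℝ U z 1 + Complex.I * fderiv ℝ U z Complex.I)

open Complex ComplexConjugate ContinuousLinearMap Filter Topology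

section FDeriv

variable {𝕜 E : Type*} [NontriviallyNormedField 𝕜] [NormedAddCommGroup E] [NormedSpace 𝕜 E]
  {x : E}

theorem ContDiffAt.differentiableAt_fderiv {F : Type*} [NormedAddCommGroup F] [NormedSpace 𝕜 F]
    {f : E → F} (hf : ContDiffAt 𝕜 2 f x) : DifferentiableAt 𝕜 (fderiv 𝕜 f) x :=
  (hf.fderiv_right (m := 1) le_rfl).differentiableAt one_ne_zero

theorem fderiv_fun_div_apply {𝕜' : Type*} [NontriviallyNormedField 𝕜'] [NormedAlgebra 𝕜 𝕜']
    {f g : E → 𝕜'} (hf : DifferentiableAt 𝕜 f x) (hg : DifferentiableAt 𝕜 g x)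
    (hx : g x ≠ 0) (v : E) :
    fderiv 𝕜 (fun y => f y / g y) x v
      = (fderiv 𝕜 f x v * g x - f x * fderiv 𝕜 g x v) / g x ^ 2 := by
  simp only [div_eq_mul_inv]
  rw [fderiv_fun_mul hf (hg.fun_inv hx), show (fun y => (g y)⁻¹) = Inv.inv ∘ g from rfl,
    fderiv_comp x (differentiableAt_inv hx) hg, fderiv_inv' hx]
  simp only [add_apply, smul_apply, comp_apply, neg_apply, mulLeftRight_apply, smul_eq_mul]
  field_simp
  ring

end FDeriv

section Wirtinger

variable {f g : ℂ → ℂ} {z : ℂ}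

theorem wirtingerZ_congr (h : f =ᶠ[𝓝 z] g) : wirtingerZ f z = wirtingerZ g z := by
  simp only [wirtingerZ, h.fderiv_eq]

theorem wirtingerZbar_add (hf : DifferentiableAt ℝ f z) (hg : DifferentiableAt ℝ g z) :
    wirtingerZbar (fun w => f w + g w) z = wirtingerZbar f z + wirtingerZbar g z := by
  simp only [wirtingerZbar, fderiv_fun_add hf hg, add_apply]
  ring

theorem wirtingerZ_div (hf : DifferentiableAt ℝ f z) (hg : DifferentiableAt ℝ g z)
    (hz : g z ≠ 0) :
    wirtingerZ (fun w => f w / g w) z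
      = (wirtingerZ f z * g z - f z * wirtingerZ g z) / g z ^ 2 := by
  simp only [wirtingerZ, fderiv_fun_div_apply hf hg hz]
  field_simp
  ring

theorem wirtingerZbar_div (hf : DifferentiableAt ℝ f z) (hg : DifferentiableAt ℝ g z)
    (hz : g z ≠ 0) :
    wirtingerZbar (fun w => f w / g w) z
      = (wirtingerZbar f z * g z - f z * wirtingerZbar g z) / g z ^ 2 := by
  simp only [wirtingerZbar, fderiv_fun_div_apply hf hg hz]
  field_simp
  ring

theorem wirtingerZ_conj : wirtingerZ (fun w => conj (f w)) z = conj (wirtingerZbar f z) := by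
  have h : (fun w => conj (f w)) = conjCLE ∘ f := rfl
  simp only [wirtingerZ, wirtingerZbar, h, conjCLE.comp_fderiv, comp_apply,
    ContinuousLinearEquiv.coe_coe, conjCLE_apply, map_mul, map_add, map_div₀, map_one, map_ofNat,
    conj_I]
  ring

theorem fderiv_sub_conj_self :
    fderiv ℝ (fun w : ℂ => w - conj w) z
      = ContinuousLinearMap.id ℝ ℂ - conjCLE.toContinuousLinearMap :=
  ((hasFDerivAt_id z).sub conjCLE.toContinuousLinearMap.hasFDerivAt).fderiv

theorem wirtingerZ_sub_conj_self : wirtingerZ (fun w => w - conj w) z = 1 := by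
  simp only [wirtingerZ, fderiv_sub_conj_self, sub_apply, id_apply, ContinuousLinearEquiv.coe_coe,
    conjCLE_apply, map_one, conj_I]
  linear_combination -I_sq

theorem wirtingerZbar_sub_conj_self : wirtingerZbar (fun w => w - conj w) z = -1 := by
  simp only [wirtingerZbar, fderiv_sub_conj_self, sub_apply, id_apply, ContinuousLinearEquiv.coe_coe,
    conjCLE_apply, map_one, conj_I]
  linear_combination I_sq

theorem fderiv_wirtingerZ_apply (hf : DifferentiableAt ℝ (fderiv ℝ f) z) (v : ℂ) :
    fderiv ℝ (wirtingerZ f) z v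
      = (1 / 2) * (fderiv ℝ (fderiv ℝ f) z v 1 - I * fderiv ℝ (fderiv ℝ f) z v I) := by
  have happly (u : ℂ) := (apply ℝ ℂ u).hasFDerivAt.comp z hf.hasFDerivAt
  have h := ((happly 1).sub ((happly I).const_mul I)).const_mul (1 / 2 : ℂ)
  rw [(show HasFDerivAt (wirtingerZ f) _ z from h).fderiv]
  simp only [smul_apply, sub_apply, comp_apply, apply_apply, smul_eq_mul]

theorem fderiv_wirtingerZbar_apply (hf : DifferentiableAt ℝ (fderiv ℝ f) z) (v : ℂ) :
    fderiv ℝ (wirtingerZbar f) z v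
      = (1 / 2) * (fderiv ℝ (fderiv ℝ f) z v 1 + I * fderiv ℝ (fderiv ℝ f) z v I) := by
  have happly (u : ℂ) := (apply ℝ ℂ u).hasFDerivAt.comp z hf.hasFDerivAt
  have h := ((happly 1).add ((happly I).const_mul I)).const_mul (1 / 2 : ℂ)
  rw [(show HasFDerivAt (wirtingerZbar f) _ z from h).fderiv]
  simp only [smul_apply, add_apply, comp_apply, apply_apply, smul_eq_mul]

theorem wirtingerZbar_wirtingerZ (hf : ContDiffAt ℝ 2 f z) :
    wirtingerZbar (wirtingerZ f) z = wirtingerZ (wirtingerZbar f) z := by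
  have hf' := hf.differentiableAt_fderiv
  have hsymm : fderiv ℝ (fderiv ℝ f) z 1 I = fderiv ℝ (fderiv ℝ f) z I 1 :=
    hf.isSymmSndFDerivAt (by simp [minSmoothness_of_isRCLikeNormedField]) 1 I
  simp only [wirtingerZ, wirtingerZbar, fderiv_wirtingerZ_apply hf',
    fderiv_wirtingerZbar_apply hf', hsymm]
  ring

theorem ContDiffAt.differentiableAt_wirtingerZ (hf : ContDiffAt ℝ 2 f z) :
    DifferentiableAt ℝ (wirtingerZ f) z := by
  have hf' := hf.differentiableAt_fderiv
  unfold wirtingerZ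
  fun_prop

end Wirtinger

/-- If `U` is `C²` on an open set `D` with `Im z ≠ 0` and solves
`∂U/∂z̄ = conj(U)/(z - z̄)`, then `ξ = U_z + U/(z - z̄)` satisfies
`∂ξ/∂z̄ = 0` on `D`. -/
theorem stmt11 (D : Set ℂ) (hD : IsOpen D) (U : ℂ → ℂ)
    (hz : ∀ z ∈ D, z.im ≠ 0)
    (hU : ContDiffOn ℝ 2 U D)
    (hpde : ∀ z ∈ D,
      wirtingerZbar U z = (starRingEnd ℂ) (U z) / (z - (starRingEnd ℂ) z)) :
    let ξ : ℂ → ℂ := fun z => wirtingerZ U z + U z / (z - (starRingEnd ℂ) z)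
    ∀ z ∈ D, wirtingerZbar ξ z = 0 := by
  intro ξ z hzD
  have hsz : z - conj z ≠ 0 := by
    rw [sub_conj]
    exact mul_ne_zero (by exact_mod_cast mul_ne_zero two_ne_zero (hz z hzD)) I_ne_zero
  have hUz : ContDiffAt ℝ 2 U z := hU.contDiffAt (hD.mem_nhds hzD)
  have hU1 : DifferentiableAt ℝ U z := hUz.differentiableAt two_ne_zero
  have hUbar1 : DifferentiableAt ℝ (fun w => conj (U w)) z := conjCLE.differentiableAt.comp z hU1
  have hs1 : DifferentiableAt ℝ (fun w => w - conj w) z :=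
    differentiableAt_id.sub conjCLE.differentiableAt
  have hquot : DifferentiableAt ℝ (fun w => U w / (w - conj w)) z := by
    simpa only [div_eq_mul_inv] using hU1.fun_mul (hs1.fun_inv hsz)
  calc wirtingerZbar ξ z
      = wirtingerZbar (wirtingerZ U) z + wirtingerZbar (fun w => U w / (w - conj w)) z :=
        wirtingerZbar_add hUz.differentiableAt_wirtingerZ hquot
    _ = wirtingerZ (fun w => conj (U w) / (w - conj w)) z
          + wirtingerZbar (fun w => U w / (w - conj w)) z := by
        rw [wirtingerZbar_wirtingerZ hUz,
          wirtingerZ_congr (eventually_of_mem (hD.mem_nhds hzD) hpde)]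
    _ = 0 := by
      rw [wirtingerZ_div hUbar1 hs1 hsz, wirtingerZbar_div hU1 hs1 hsz, wirtingerZ_conj,
        wirtingerZ_sub_conj_self, wirtingerZbar_sub_conj_self, hpde z hzD, map_div₀, conj_conj,
        show conj (z - conj z) = -(z - conj z) by simp]
      field_simp
      ring
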